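/- arXiv:2407.14515 — 5 statements merged into one kernel-verified Lean document; each statement's English description precedes it below -/
import Mathlib

section
/- Let R be a commutative ring and let w₁, …, w_k and u₁, …, u_k be vectors in R^k (equivalently, columns of k×k matrices). Then det(w₁, …, w_k) · det(u₁, …, u_k) = Σ_{b=1}^{k} det(w₁, …, w_{k−1}, u_b) · det(u₁, …, u_{b−1}, w_k, u_{b+1}, …, u_k), where det(v₁, …, v_k) denotes the determinant of the k×k matrix with columns v₁, …, v_k. -/
open Finset

/-- The determinant of the square matrix whose `j`-th column is `v j`. -/
noncomputable def colDet {R : Type*} [CommRing R] {k : ℕ}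
    (v : Fin k → (Fin k → R)) : R :=
  (Matrix.of fun i j => v j i).det

lemma colDet_update {R : Type*} [CommRing R] {k : ℕ}
    (v : Fin k → (Fin k → R)) (l : Fin k) (x : Fin k → R) :
    colDet (Function.update v l x)
      = ((Matrix.of fun i j => v j i).updateCol l x).det := by
  unfold colDet
  congr 1
  ext i j
  by_cases h : j = l <;> simp [Matrix.updateCol_apply, Function.update, h]

/-- The exchange (Plücker) identity: for columns `w 0, …, w m` and `u 0, …, u m` in `R^(m+1)`,
`det(w) · det(u) = Σ_b det(w with last column replaced by u b) · det(u with b-th column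
replaced by the last column of w)`. -/
theorem det_mul_det_eq_sum_exchange_last
    (R : Type*) [CommRing R] (m : ℕ) (w u : Fin (m + 1) → (Fin (m + 1) → R)) :
    colDet w * colDet u
      = ∑ b : Fin (m + 1),
          colDet (Function.update w (Fin.last m) (u b)) *
            colDet (Function.update u b (w (Fin.last m))) := by
  set W : Matrix (Fin (m+1)) (Fin (m+1)) R := Matrix.of fun i j => w j i with hW
  set U : Matrix (Fin (m+1)) (Fin (m+1)) R := Matrix.of fun i j => u j i with hU
  have hcol : ∀ b, u b = fun i => U i b := fun b => rfl
  have hwl : w (Fin.last m) = fun i => W i (Fin.last m) := rfl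
  calc
    colDet w * colDet u = W.det * U.det := rfl
    _ = ∑ b, Matrix.cramer W (u b) (Fin.last m) * Matrix.cramer U (w (Fin.last m)) b := by
        have key : ∑ b, Matrix.cramer U (w (Fin.last m)) b • u b
            = U.det • (w (Fin.last m)) := by
          have := Matrix.mulVec_cramer U (w (Fin.last m))
          funext i
          have hi := congrFun this i
          simp [Matrix.mulVec, dotProduct, Finset.sum_apply,
            mul_comm] at hi ⊢
          exact hi
        have : Matrix.cramer W (∑ b, Matrix.cramer U (w (Fin.last m)) b • u b) (Fin.last m)
            = ∑ b, Matrix.cramer U (w (Fin.last m)) b * Matrix.cramer W (u b) (Fin.last m) := by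
          rw [map_sum]
          simp [Finset.sum_apply]
        rw [key] at this
        simp only [map_smul, Pi.smul_apply, smul_eq_mul] at this
        have hWW : Matrix.cramer W (w (Fin.last m)) (Fin.last m) = W.det := by
          rw [Matrix.cramer_apply, hwl]
          rw [show W.updateCol (Fin.last m) (fun i => W i (Fin.last m)) = W from
            Matrix.updateCol_eq_self W (Fin.last m)]
        rw [hWW] at this
        rw [mul_comm W.det U.det, this]
        exact (Finset.sum_congr rfl fun b _ => mul_comm _ _)
    _ = _ := by
        refine Finset.sum_congr rfl fun b _ => ?_
        rw [colDet_update, colDet_update, Matrix.cramer_apply, Matrix.cramer_apply]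
end

section
/- Let (p₁₂, p₁₃, p₁₄, p₂₃, p₂₄, p₃₄) be a nonzero vector in ℂ^6. Then p₁₂p₃₄ − p₁₃p₂₄ + p₁₄p₂₃ = 0 if and only if there exists a 2×4 complex matrix M such that for all 1 ≤ a < b ≤ 4, p_{ab} equals the determinant of the 2×2 submatrix of M formed by columns a and b. -/
set_option linter.unreachableTactic false
set_option linter.unusedTactic false


/-- The `2 × 2` minor of a `2 × 4` matrix on columns `a` and `b` (in that order). -/
noncomputable def pluckerMinor (M : Matrix (Fin 2) (Fin 4) ℂ) (a b : Fin 4) : ℂ :=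
  (M.submatrix id ![a, b]).det

lemma pluckerMinor_eq (M : Matrix (Fin 2) (Fin 4) ℂ) (a b : Fin 4) :
    pluckerMinor M a b = M 0 a * M 1 b - M 0 b * M 1 a := by
  simp [pluckerMinor, Matrix.det_fin_two, Matrix.submatrix_apply]

/-- A nonzero vector `(p₁₂, p₁₃, p₁₄, p₂₃, p₂₄, p₃₄) ∈ ℂ^6` satisfies the Plücker relation
`p₁₂p₃₄ − p₁₃p₂₄ + p₁₄p₂₃ = 0` if and only if it is the vector of `2 × 2` minors of some
`2 × 4` complex matrix: the image of `Gr(2,4)` under the Plücker embedding is the variety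
of the Plücker ideal `I_{2,4}`. -/
theorem gr24_eq_variety_of_pluecker_ideal
    (p12 p13 p14 p23 p24 p34 : ℂ)
    (hne : ¬(p12 = 0 ∧ p13 = 0 ∧ p14 = 0 ∧ p23 = 0 ∧ p24 = 0 ∧ p34 = 0)) :
    p12 * p34 - p13 * p24 + p14 * p23 = 0 ↔
      ∃ M : Matrix (Fin 2) (Fin 4) ℂ,
        p12 = pluckerMinor M 0 1 ∧ p13 = pluckerMinor M 0 2 ∧
        p14 = pluckerMinor M 0 3 ∧ p23 = pluckerMinor M 1 2 ∧
        p24 = pluckerMinor M 1 3 ∧ p34 = pluckerMinor M 2 3 := by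
  constructor
  · intro hrel
    by_cases h12 : p12 ≠ 0
    · refine ⟨Matrix.of ![![p12, 0, -p23, -p24], ![0, 1, p13 / p12, p14 / p12]], ?_, ?_, ?_, ?_, ?_, ?_⟩ <;>
        simp [pluckerMinor_eq] <;> field_simp <;> (first | ring1 | linear_combination hrel | linear_combination -hrel | linear_combination 2*hrel | linear_combination -2*hrel | linear_combination (p12+1)*hrel | linear_combination -(p12+1)*hrel | linear_combination (p34+1)*hrel | linear_combination -(p34+1)*hrel | linear_combination (p13+1)*hrel | linear_combination -(p13+1)*hrel | linear_combination (p14+1)*hrel | linear_combination -(p14+1)*hrel | linear_combination (p23+1)*hrel | linear_combination -(p23+1)*hrel | linear_combination (p24+1)*hrel | linear_combination -(p24+1)*hrel | linear_combination -p12*hrel | linear_combination -p34*hrel | linear_combination p12*hrel | linear_combination p34*hrel)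
    by_cases h13 : p13 ≠ 0
    · refine ⟨Matrix.of ![![p13, p23, 0, -p34], ![0, p12 / p13, 1, p14 / p13]], ?_, ?_, ?_, ?_, ?_, ?_⟩ <;>
        simp [pluckerMinor_eq] <;> field_simp <;> (first | ring1 | linear_combination hrel | linear_combination -hrel | linear_combination 2*hrel | linear_combination -2*hrel | linear_combination (p12+1)*hrel | linear_combination -(p12+1)*hrel | linear_combination (p34+1)*hrel | linear_combination -(p34+1)*hrel | linear_combination (p13+1)*hrel | linear_combination -(p13+1)*hrel | linear_combination (p14+1)*hrel | linear_combination -(p14+1)*hrel | linear_combination (p23+1)*hrel | linear_combination -(p23+1)*hrel | linear_combination (p24+1)*hrel | linear_combination -(p24+1)*hrel | linear_combination -p12*hrel | linear_combination -p34*hrel | linear_combination p12*hrel | linear_combination p34*hrel)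
    by_cases h14 : p14 ≠ 0
    · refine ⟨Matrix.of ![![p14, p24, p34, 0], ![0, p12 / p14, p13 / p14, 1]], ?_, ?_, ?_, ?_, ?_, ?_⟩ <;>
        simp [pluckerMinor_eq] <;> field_simp <;> (first | ring1 | linear_combination hrel | linear_combination -hrel | linear_combination 2*hrel | linear_combination -2*hrel | linear_combination (p12+1)*hrel | linear_combination -(p12+1)*hrel | linear_combination (p34+1)*hrel | linear_combination -(p34+1)*hrel | linear_combination (p13+1)*hrel | linear_combination -(p13+1)*hrel | linear_combination (p14+1)*hrel | linear_combination -(p14+1)*hrel | linear_combination (p23+1)*hrel | linear_combination -(p23+1)*hrel | linear_combination (p24+1)*hrel | linear_combination -(p24+1)*hrel | linear_combination -p12*hrel | linear_combination -p34*hrel | linear_combination p12*hrel | linear_combination p34*hrel)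
    by_cases h23 : p23 ≠ 0
    · refine ⟨Matrix.of ![![p13, p23, 0, -p34], ![-p12 / p23, 0, 1, p24 / p23]], ?_, ?_, ?_, ?_, ?_, ?_⟩ <;>
        simp [pluckerMinor_eq] <;> field_simp <;> (first | ring1 | linear_combination hrel | linear_combination -hrel | linear_combination 2*hrel | linear_combination -2*hrel | linear_combination (p12+1)*hrel | linear_combination -(p12+1)*hrel | linear_combination (p34+1)*hrel | linear_combination -(p34+1)*hrel | linear_combination (p13+1)*hrel | linear_combination -(p13+1)*hrel | linear_combination (p14+1)*hrel | linear_combination -(p14+1)*hrel | linear_combination (p23+1)*hrel | linear_combination -(p23+1)*hrel | linear_combination (p24+1)*hrel | linear_combination -(p24+1)*hrel | linear_combination -p12*hrel | linear_combination -p34*hrel | linear_combination p12*hrel | linear_combination p34*hrel)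
    by_cases h24 : p24 ≠ 0
    · refine ⟨Matrix.of ![![p14, p24, p34, 0], ![-p12 / p24, 0, p23 / p24, 1]], ?_, ?_, ?_, ?_, ?_, ?_⟩ <;>
        simp [pluckerMinor_eq] <;> field_simp <;> (first | ring1 | linear_combination hrel | linear_combination -hrel | linear_combination 2*hrel | linear_combination -2*hrel | linear_combination (p12+1)*hrel | linear_combination -(p12+1)*hrel | linear_combination (p34+1)*hrel | linear_combination -(p34+1)*hrel | linear_combination (p13+1)*hrel | linear_combination -(p13+1)*hrel | linear_combination (p14+1)*hrel | linear_combination -(p14+1)*hrel | linear_combination (p23+1)*hrel | linear_combination -(p23+1)*hrel | linear_combination (p24+1)*hrel | linear_combination -(p24+1)*hrel | linear_combination -p12*hrel | linear_combination -p34*hrel | linear_combination p12*hrel | linear_combination p34*hrel)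
    by_cases h34 : p34 ≠ 0
    · refine ⟨Matrix.of ![![p14, p24, p34, 0], ![-p13 / p34, -p23 / p34, 0, 1]], ?_, ?_, ?_, ?_, ?_, ?_⟩ <;>
        simp [pluckerMinor_eq] <;> field_simp <;> (first | ring1 | linear_combination hrel | linear_combination -hrel | linear_combination 2*hrel | linear_combination -2*hrel | linear_combination (p12+1)*hrel | linear_combination -(p12+1)*hrel | linear_combination (p34+1)*hrel | linear_combination -(p34+1)*hrel | linear_combination (p13+1)*hrel | linear_combination -(p13+1)*hrel | linear_combination (p14+1)*hrel | linear_combination -(p14+1)*hrel | linear_combination (p23+1)*hrel | linear_combination -(p23+1)*hrel | linear_combination (p24+1)*hrel | linear_combination -(p24+1)*hrel | linear_combination -p12*hrel | linear_combination -p34*hrel | linear_combination p12*hrel | linear_combination p34*hrel)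
    push_neg at h12 h13 h14 h23 h24 h34
    exact absurd ⟨h12, h13, h14, h23, h24, h34⟩ hne
  · rintro ⟨M, h1, h2, h3, h4, h5, h6⟩
    simp only [pluckerMinor_eq] at h1 h2 h3 h4 h5 h6
    subst h1 h2 h3 h4 h5 h6
    ring
end

section
/- Let K be a field and let M and M′ be k×n matrices over K, each of rank k. Then M and M′ have the same row space (the same k-dimensional subspace of K^n spanned by their rows) if and only if there exists a nonzero scalar c ∈ K such that for every strictly increasing selection I of k column indices, det(M′_I) = c · det(M_I), where M_I denotes the k×k submatrix of M on the columns indexed by I. -/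
open Matrix Submodule Set

section Aux

variable {K : Type*} [Field K] {k n : ℕ}

lemma aux_span_mul_le (A : Matrix (Fin k) (Fin k) K) (M : Matrix (Fin k) (Fin n) K) :
    Submodule.span K (Set.range (A * M)) ≤ Submodule.span K (Set.range M) := by
  change Submodule.span K (Set.range (A * M).row) ≤ Submodule.span K (Set.range M.row)
  rw [← range_vecMulLinear, ← range_vecMulLinear]
  rintro x ⟨y, rfl⟩
  exact ⟨y ᵥ* A, by simp [Matrix.vecMulLinear_apply, Matrix.vecMul_vecMul]⟩

lemma aux_span_mul_eq {A : Matrix (Fin k) (Fin k) K} (hA : IsUnit A.det)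
    (M : Matrix (Fin k) (Fin n) K) :
    Submodule.span K (Set.range (A * M)) = Submodule.span K (Set.range M) := by
  refine le_antisymm (aux_span_mul_le A M) ?_
  have h : M = A⁻¹ * (A * M) := by
    rw [← Matrix.mul_assoc, Matrix.nonsing_inv_mul _ hA, Matrix.one_mul]
  nth_rewrite 1 [h]
  exact aux_span_mul_le _ _

lemma aux_rows_li {M : Matrix (Fin k) (Fin n) K} (hM : M.rank = k) :
    LinearIndependent K (fun i => M i) := by
  rw [linearIndependent_iff_card_eq_finrank_span]
  rw [Matrix.rank_eq_finrank_span_row] at hM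
  rw [Fintype.card_fin]
  exact hM.symm

lemma aux_submatrix_mul (A : Matrix (Fin k) (Fin k) K) (M : Matrix (Fin k) (Fin n) K)
    (I : Fin k → Fin n) :
    (A * M).submatrix id I = A * (M.submatrix id I) := by
  ext i j
  simp [Matrix.mul_apply]

lemma aux_exists_nonzero_minor (M : Matrix (Fin k) (Fin n) K) (hM : M.rank = k) :
    ∃ J : Fin k → Fin n, Function.Injective J ∧ (M.submatrix id J).det ≠ 0 := by
  classical
  have hM' := hM
  rw [Matrix.rank_eq_finrank_span_cols] at hM'
  obtain ⟨b, hbsub, hbspan, hbli⟩ := exists_linearIndependent K (Set.range Mᵀ)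
  have hbfin : b.Finite := (Set.finite_range Mᵀ).subset hbsub
  haveI := hbfin.fintype
  have hcard : Fintype.card b = k := by
    have := linearIndependent_iff_card_eq_finrank_span.mp hbli
    rwa [Subtype.range_coe, Set.finrank, hbspan,
      show Submodule.span K (Set.range Mᵀ) = Submodule.span K (Set.range M.col) from rfl, hM'] at this
  let e : Fin k ≃ b := (Fintype.equivFinOfCardEq hcard).symm
  choose g hg using fun x : b => hbsub x.2
  have hginj : Function.Injective g := by
    intro x y hxy
    have : (x : Fin k → K) = y := by rw [← hg x, ← hg y, hxy]
    exact Subtype.ext this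
  refine ⟨g ∘ e, hginj.comp e.injective, ?_⟩
  have hcols : (M.submatrix id (g ∘ e))ᵀ = fun a => ((e a : b) : Fin k → K) := by
    funext a
    exact hg (e a)
  have hli : LinearIndependent K (fun a => (M.submatrix id (g ∘ e))ᵀ a) := by
    rw [hcols]
    exact hbli.comp e e.injective
  have := Matrix.linearIndependent_cols_iff_isUnit.mp hli
  rw [Matrix.isUnit_iff_isUnit_det, isUnit_iff_ne_zero] at this
  exact this

lemma aux_minor_all {M M' : Matrix (Fin k) (Fin n) K} {c : K}
    (h : ∀ I : Fin k → Fin n, StrictMono I →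
      (M'.submatrix id I).det = c * (M.submatrix id I).det)
    (I : Fin k → Fin n) :
    (M'.submatrix id I).det = c * (M.submatrix id I).det := by
  by_cases hI : Function.Injective I
  · set σ := Tuple.sort I with hσ
    have hmono : Monotone (I ∘ σ) := Tuple.monotone_sort I
    have hsm : StrictMono (I ∘ σ) :=
      hmono.strictMono_of_injective (hI.comp σ.injective)
    have h1 := h _ hsm
    have e1 : (M'.submatrix id (I ∘ σ)).det
        = Equiv.Perm.sign σ * (M'.submatrix id I).det := by
      rw [show M'.submatrix id (I ∘ σ) = (M'.submatrix id I).submatrix id σ from rfl,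
        Matrix.det_permute']
    have e2 : (M.submatrix id (I ∘ σ)).det
        = Equiv.Perm.sign σ * (M.submatrix id I).det := by
      rw [show M.submatrix id (I ∘ σ) = (M.submatrix id I).submatrix id σ from rfl,
        Matrix.det_permute']
    rw [e1, e2] at h1
    have hs : ((Equiv.Perm.sign σ : ℤ) : K) ≠ 0 := by
      rcases Int.units_eq_one_or (Equiv.Perm.sign σ) with hh | hh <;> simp [hh]
    rcases Int.units_eq_one_or (Equiv.Perm.sign σ) with hh | hh <;> rw [hh] at h1
    · simpa using h1
    · simp only [Units.val_neg, Units.val_one, Int.cast_neg, Int.cast_one,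
        neg_one_mul, mul_neg, neg_inj] at h1
      exact h1
  · rw [Function.not_injective_iff] at hI
    obtain ⟨a, b, hab, hne⟩ := hI
    have z1 : (M'.submatrix id I).det = 0 := by
      apply Matrix.det_zero_of_column_eq hne
      intro i; simp [hab]
    have z2 : (M.submatrix id I).det = 0 := by
      apply Matrix.det_zero_of_column_eq hne
      intro i; simp [hab]
    rw [z1, z2, mul_zero]

lemma aux_entry_eq_det {N : Matrix (Fin k) (Fin n) K} {I₀ : Fin k → Fin n}
    (hN : N.submatrix id I₀ = 1) (a : Fin k) (j : Fin n) :
    (N.submatrix id (Function.update I₀ a j)).det = N a j := by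
  classical
  have h : N.submatrix id (Function.update I₀ a j)
      = (1 : Matrix (Fin k) (Fin k) K).updateCol a (fun i => N i j) := by
    ext i b
    by_cases hb : b = a
    · subst hb; simp [Matrix.updateCol_apply]
    · have : N i (I₀ b) = (1 : Matrix (Fin k) (Fin k) K) i b := by
        rw [← hN]; rfl
      simp [Matrix.updateCol_apply, hb, Function.update_apply, this]
  rw [h, ← Matrix.cramer_apply, Matrix.cramer_one]
  rfl

end Aux

/-- Two rank-`k` matrices of size `k × n` over a field have the same row space if and only
if their vectors of maximal minors (Plücker coordinates) agree up to a common nonzero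
scalar: the Plücker embedding is well defined and injective on `Gr(k,n)`. -/
theorem rowSpace_eq_iff_plueckerCoords_proportional
    (K : Type*) [Field K] (k n : ℕ)
    (M M' : Matrix (Fin k) (Fin n) K) (hM : M.rank = k) (hM' : M'.rank = k) :
    Submodule.span K (Set.range M) = Submodule.span K (Set.range M') ↔
      ∃ c : K, c ≠ 0 ∧ ∀ I : Fin k → Fin n, StrictMono I →
        (M'.submatrix id I).det = c * (M.submatrix id I).det := by
  classical
  constructor
  · intro hspan
    have hliM := aux_rows_li hM
    have hrow : ∀ (C : Matrix (Fin k) (Fin k) K) (P : Matrix (Fin k) (Fin n) K) i,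
        (C * P) i = C i ᵥ* P := by
      intro C P i; funext j; simp [Matrix.mul_apply, Matrix.vecMul, dotProduct]
    -- M' = A * M
    have hmem : ∀ i, M' i ∈ LinearMap.range M.vecMulLinear := by
      intro i
      rw [range_vecMulLinear, show M.row = M from rfl, hspan]
      exact subset_span (Set.mem_range_self i)
    choose arow harow using hmem
    set A : Matrix (Fin k) (Fin k) K := Matrix.of arow with hA
    have hAM : M' = A * M := by
      ext i j
      rw [hrow]
      have := harow i
      rw [Matrix.vecMulLinear_apply] at this
      rw [show A i = arow i from rfl, this]
    have hmem' : ∀ i, M i ∈ LinearMap.range M'.vecMulLinear := by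
      intro i
      rw [range_vecMulLinear, show M'.row = M' from rfl, ← hspan]
      exact subset_span (Set.mem_range_self i)
    choose brow hbrow using hmem'
    set B : Matrix (Fin k) (Fin k) K := Matrix.of brow with hB
    have hBM : M = B * M' := by
      ext i j
      rw [hrow]
      have := hbrow i
      rw [Matrix.vecMulLinear_apply] at this
      rw [show B i = brow i from rfl, this]
    have hBA : B * A = 1 := by
      have hinj : Function.Injective M.vecMul := Matrix.vecMul_injective_iff.mpr hliM
      have hMM : (B * A) * M = (1 : Matrix (Fin k) (Fin k) K) * M := by
        rw [Matrix.mul_assoc, ← hAM, ← hBM, Matrix.one_mul]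
      ext i j
      have key : ((B * A) i) ᵥ* M = ((1 : Matrix (Fin k) (Fin k) K) i) ᵥ* M := by
        rw [← hrow, ← hrow, hMM]
      have := hinj key
      exact congrFun this j
    have hAunit : IsUnit A := by
      have hAB : A * B = 1 := mul_eq_one_comm.mpr hBA
      exact ⟨⟨A, B, hAB, hBA⟩, rfl⟩
    refine ⟨A.det, ?_, ?_⟩
    · exact (Matrix.isUnit_iff_isUnit_det A).mp hAunit |>.ne_zero
    · intro I _
      rw [hAM, aux_submatrix_mul, Matrix.det_mul]
  · rintro ⟨c, hc, h⟩
    have hall := aux_minor_all h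
    obtain ⟨I₀, hI₀inj, hd⟩ := aux_exists_nonzero_minor M hM
    set d : K := (M.submatrix id I₀).det with hdd
    have hd' : (M'.submatrix id I₀).det = c * d := hall I₀
    have hdu : IsUnit (M.submatrix id I₀).det := isUnit_iff_ne_zero.mpr hd
    have hdu' : IsUnit (M'.submatrix id I₀).det := by
      rw [hd']; exact isUnit_iff_ne_zero.mpr (mul_ne_zero hc hd)
    set P : Matrix (Fin k) (Fin k) K := (M.submatrix id I₀)⁻¹ with hP
    set P' : Matrix (Fin k) (Fin k) K := (M'.submatrix id I₀)⁻¹ with hP'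
    have hPdet : IsUnit P.det := Matrix.isUnit_nonsing_inv_det _ hdu
    have hP'det : IsUnit P'.det := Matrix.isUnit_nonsing_inv_det _ hdu'
    have hspan1 : Submodule.span K (Set.range (P * M)) = Submodule.span K (Set.range M) :=
      aux_span_mul_eq hPdet M
    have hspan2 : Submodule.span K (Set.range (P' * M')) = Submodule.span K (Set.range M') :=
      aux_span_mul_eq hP'det M'
    have hN1 : (P * M).submatrix id I₀ = 1 := by
      rw [aux_submatrix_mul, hP, Matrix.nonsing_inv_mul _ hdu]
    have hN1' : (P' * M').submatrix id I₀ = 1 := by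
      rw [aux_submatrix_mul, hP', Matrix.nonsing_inv_mul _ hdu']
    have hNN : P * M = P' * M' := by
      ext a j
      have e1 : (P * M) a j = ((P * M).submatrix id (Function.update I₀ a j)).det :=
        (aux_entry_eq_det hN1 a j).symm
      have e2 : (P' * M') a j = ((P' * M').submatrix id (Function.update I₀ a j)).det :=
        (aux_entry_eq_det hN1' a j).symm
      rw [e1, e2, aux_submatrix_mul, aux_submatrix_mul, Matrix.det_mul, Matrix.det_mul]
      rw [hall (Function.update I₀ a j)]
      have hdP : P.det = d⁻¹ := by
        rw [hP, Matrix.det_nonsing_inv, Ring.inverse_eq_inv']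
      have hdP' : P'.det = (c * d)⁻¹ := by
        rw [hP', Matrix.det_nonsing_inv, hd', Ring.inverse_eq_inv']
      rw [hdP, hdP']
      field_simp
    rw [← hspan1, ← hspan2, hNN]
end

section
/- Let P ⊆ ℝ^n. Then P is the convex hull of a finite set of points if and only if P is bounded and there exist an m×n real matrix A and a vector b ∈ ℝ^m such that P = {x ∈ ℝ^n | Ax ≥ b} (inequality entrywise). -/
open Set

/-- A set is `Polyh` if it is a finite intersection of closed halfspaces
given by linear functionals. -/
def Polyh {V : Type} [AddCommGroup V] [Module ℝ V] (P : Set V) : Prop :=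
  ∃ (ι : Type) (_ : Fintype ι) (f : ι → V →ₗ[ℝ] ℝ) (b : ι → ℝ),
    P = {x | ∀ i, b i ≤ f i x}

variable {V W : Type} [AddCommGroup V] [Module ℝ V] [AddCommGroup W] [Module ℝ W]

theorem Polyh.halfspace (f : V →ₗ[ℝ] ℝ) (c : ℝ) : Polyh {x | c ≤ f x} :=
  ⟨PUnit, inferInstance, fun _ => f, fun _ => c, by ext x; simp⟩

theorem Polyh.hyperplane (f : V →ₗ[ℝ] ℝ) (c : ℝ) : Polyh {x | f x = c} := by
  refine ⟨Bool, inferInstance, fun i => if i then f else -f, fun i => if i then c else -c, ?_⟩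
  ext x
  simp only [Set.mem_setOf_eq, Bool.forall_bool, if_true, if_false, LinearMap.neg_apply,
    neg_le_neg_iff, Bool.false_eq_true, reduceIte]
  constructor
  · rintro rfl; exact ⟨le_refl _, le_refl _⟩
  · rintro ⟨h1, h2⟩; exact le_antisymm h1 h2

theorem Polyh.iInter {ι' : Type} [Fintype ι'] {P : ι' → Set V} (h : ∀ i, Polyh (P i)) :
    Polyh (⋂ i, P i) := by
  choose κ hκ f b hP using h
  haveI := hκ
  refine ⟨Σ i, κ i, inferInstance, fun p => f p.1 p.2, fun p => b p.1 p.2, ?_⟩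
  ext x
  simp only [Set.mem_iInter, Sigma.forall, Set.mem_setOf_eq]
  exact forall_congr' fun i => by rw [hP i]; rfl

theorem Polyh.inter {P Q : Set V} (hP : Polyh P) (hQ : Polyh Q) : Polyh (P ∩ Q) := by
  have : P ∩ Q = ⋂ i : Bool, (if i then P else Q) := by
    ext x; simp [Bool.forall_bool, and_comm]
  rw [this]
  exact Polyh.iInter (by rintro (_|_) <;> simpa)

/-- Fourier–Motzkin elimination: projection of a polyhedron along one coordinate. -/
theorem Polyh.proj_one {Q : Set (V × ℝ)} (hQ : Polyh Q) :
    Polyh {x : V | ∃ t : ℝ, (x, t) ∈ Q} := by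
  obtain ⟨ι, _, f, b, rfl⟩ := hQ
  classical
  set ℓ : ι → V →ₗ[ℝ] ℝ := fun i => (f i).comp (LinearMap.inl ℝ V ℝ) with hℓ
  set c : ι → ℝ := fun i => f i (0, 1) with hc
  have hsplit : ∀ i x t, f i (x, t) = ℓ i x + t * c i := by
    intro i x t
    have : (x, t) = (x, (0:ℝ)) + t • ((0:V), (1:ℝ)) := by
      simp [Prod.ext_iff]
    rw [this, map_add, map_smul]
    simp [hℓ, hc, smul_eq_mul]
  -- new index type
  refine ⟨({i // c i = 0}) ⊕ ({i // 0 < c i} × {j // c j < 0}), inferInstance,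
    Sum.elim (fun i => ℓ i.1)
      (fun p => c p.1.1 • ℓ p.2.1 - c p.2.1 • ℓ p.1.1),
    Sum.elim (fun i => b i.1) (fun p => c p.1.1 * b p.2.1 - c p.2.1 * b p.1.1), ?_⟩
  ext x
  simp only [Set.mem_setOf_eq, Sum.forall, Sum.elim_inl, Sum.elim_inr]
  constructor
  · rintro ⟨t, ht⟩
    refine ⟨fun i => ?_, fun p => ?_⟩
    · have := ht i.1
      rw [hsplit, i.2, mul_zero, add_zero] at this
      exact this
    · obtain ⟨⟨i, hi⟩, ⟨j, hj⟩⟩ := p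
      have h1 := ht i; have h2 := ht j
      rw [hsplit] at h1 h2
      simp only [LinearMap.sub_apply, LinearMap.smul_apply, smul_eq_mul]
      nlinarith [mul_le_mul_of_nonneg_left h1 (le_of_lt (neg_pos.2 hj)),
        mul_le_mul_of_nonneg_left h2 (le_of_lt hi)]
  · rintro ⟨h0, hpair⟩
    -- choose t
    by_cases hpos : ∃ i, 0 < c i
    · -- t := max of lower bounds
      obtain ⟨i0, hi0⟩ := hpos
      haveI : Nonempty {i // 0 < c i} := ⟨⟨i0, hi0⟩⟩
      set t : ℝ := ⨆ i : {i // 0 < c i}, (b i.1 - ℓ i.1 x) / c i.1 with hT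
      have hfin : ∀ i : {i // 0 < c i}, (b i.1 - ℓ i.1 x) / c i.1 ≤ t :=
        fun i => le_ciSup (f := fun i : {i // 0 < c i} => (b i.1 - ℓ i.1 x) / c i.1)
          (Set.Finite.bddAbove (Set.finite_range _)) i
      refine ⟨t, fun i => ?_⟩
      rcases lt_trichotomy (c i) 0 with hlt | heq | hgt
      · -- upper bound constraint: t ≤ (b i - ℓ i x)/c i
        have hub : t ≤ (b i - ℓ i x) / c i := by
          apply ciSup_le
          rintro ⟨j, hj⟩
          have := hpair ⟨⟨j, hj⟩, ⟨i, hlt⟩⟩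
          simp only [LinearMap.sub_apply, LinearMap.smul_apply, smul_eq_mul] at this
          have hrw : (b i - ℓ i x) / c i = (ℓ i x - b i) / (-c i) := by
            rw [← neg_div_neg_eq]; ring_nf
          rw [hrw, div_le_div_iff₀ hj (neg_pos.2 hlt)]
          nlinarith
        rw [le_div_iff_of_neg hlt] at hub
        rw [hsplit]; nlinarith
      · rw [hsplit, heq, mul_zero, add_zero]; exact h0 ⟨i, heq⟩
      · have := hfin ⟨i, hgt⟩
        rw [div_le_iff₀ hgt] at this
        rw [hsplit]; nlinarith
    · -- no lower bounds: choose t very negative, or handle upper bounds only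
      push_neg at hpos
      by_cases hneg : ∃ j, c j < 0
      · obtain ⟨j0, hj0⟩ := hneg
        haveI : Nonempty {j // c j < 0} := ⟨⟨j0, hj0⟩⟩
        set t : ℝ := ⨅ j : {j // c j < 0}, (b j.1 - ℓ j.1 x) / c j.1 with hT
        have hfin : ∀ j : {j // c j < 0}, t ≤ (b j.1 - ℓ j.1 x) / c j.1 :=
          fun j => ciInf_le (f := fun j : {j // c j < 0} => (b j.1 - ℓ j.1 x) / c j.1)
          (Set.Finite.bddBelow (Set.finite_range _)) j
        refine ⟨t, fun i => ?_⟩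
        rcases lt_trichotomy (c i) 0 with hlt | heq | hgt
        · have := hfin ⟨i, hlt⟩
          rw [le_div_iff_of_neg hlt] at this
          rw [hsplit]; nlinarith
        · rw [hsplit, heq, mul_zero, add_zero]; exact h0 ⟨i, heq⟩
        · exact absurd hgt (not_lt.2 (hpos i))
      · push_neg at hneg
        refine ⟨0, fun i => ?_⟩
        have heq : c i = 0 := le_antisymm (hpos i) (hneg i)
        rw [hsplit, heq, mul_zero, add_zero]
        exact h0 ⟨i, heq⟩

theorem Polyh.preimage (g : W →ₗ[ℝ] V) {P : Set V} (hP : Polyh P) : Polyh (g ⁻¹' P) := by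
  obtain ⟨ι, _, f, b, rfl⟩ := hP
  exact ⟨ι, inferInstance, fun i => (f i).comp g, b, rfl⟩

/-- The linear equivalence `(V × ℝ^k) × ℝ ≃ V × ℝ^(k+1)` by appending the last coordinate. -/
noncomputable def snocEquiv (k : ℕ) : ((V × (Fin k → ℝ)) × ℝ) ≃ₗ[ℝ] (V × (Fin (k + 1) → ℝ)) where
  toFun p := (p.1.1, Fin.snoc p.1.2 p.2)
  invFun q := ((q.1, Fin.init q.2), q.2 (Fin.last k))
  map_add' p q := by
    refine Prod.ext rfl ?_
    funext i
    refine Fin.lastCases ?_ (fun j => ?_) i <;> simp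
  map_smul' c p := by
    refine Prod.ext rfl ?_
    funext i
    refine Fin.lastCases ?_ (fun j => ?_) i <;> simp
  left_inv p := by
    refine Prod.ext (Prod.ext rfl ?_) ?_ <;> simp
  right_inv q := by
    refine Prod.ext rfl ?_
    simp [Fin.snoc_init_self]

theorem Polyh.proj {k : ℕ} {Q : Set (V × (Fin k → ℝ))} (hQ : Polyh Q) :
    Polyh {x : V | ∃ y, (x, y) ∈ Q} := by
  induction k with
  | zero =>
    have : {x : V | ∃ y, (x, y) ∈ Q} = (LinearMap.inl ℝ V (Fin 0 → ℝ)) ⁻¹' Q := by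
      ext x
      constructor
      · rintro ⟨y, hy⟩
        simpa [Subsingleton.elim (0 : Fin 0 → ℝ) y] using hy
      · intro h; exact ⟨0, h⟩
    rw [this]; exact hQ.preimage _
  | succ k ih =>
    set e := snocEquiv (V := V) k
    have hQ' : Polyh ((e.toLinearMap) ⁻¹' Q) := hQ.preimage _
    have h1 : Polyh {p : V × (Fin k → ℝ) | ∃ t, (p, t) ∈ (e.toLinearMap) ⁻¹' Q} :=
      hQ'.proj_one
    have h2 := ih h1
    convert h2 using 1
    ext x
    simp only [Set.mem_setOf_eq, Set.mem_preimage]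
    constructor
    · rintro ⟨y, hy⟩
      refine ⟨Fin.init y, y (Fin.last k), ?_⟩
      show (x, Fin.snoc (Fin.init y) (y (Fin.last k))) ∈ Q
      rwa [Fin.snoc_init_self]
    · rintro ⟨y, t, hy⟩
      exact ⟨Fin.snoc y t, hy⟩

theorem convexHull_range_eq_sum {k : ℕ} (s : Fin k → W) :
    convexHull ℝ (Set.range s) =
      {x | ∃ l : Fin k → ℝ, (∀ i, 0 ≤ l i) ∧ ∑ i, l i = 1 ∧ ∑ i, l i • s i = x} := by
  apply Subset.antisymm
  · apply convexHull_min
    · rintro _ ⟨i, rfl⟩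
      refine ⟨Pi.single i 1, fun j => ?_, ?_, ?_⟩
      · rcases eq_or_ne i j with rfl | h
        · simp
        · simp [Pi.single_eq_of_ne (Ne.symm h)]
      · simp [Finset.sum_pi_single']
      · rw [Finset.sum_eq_single i]
        · simp
        · intro j _ hj; simp [Pi.single_eq_of_ne hj]
        · intro h; exact absurd (Finset.mem_univ i) h
    · rintro x ⟨lx, hlx0, hlx1, rfl⟩ y ⟨ly, hly0, hly1, rfl⟩ a b ha hb hab
      refine ⟨fun i => a * lx i + b * ly i,
        fun i => add_nonneg (mul_nonneg ha (hlx0 i)) (mul_nonneg hb (hly0 i)), ?_, ?_⟩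
      · rw [Finset.sum_add_distrib, ← Finset.mul_sum, ← Finset.mul_sum, hlx1, hly1]
        simpa using hab
      · rw [Finset.smul_sum, Finset.smul_sum, ← Finset.sum_add_distrib]
        congr 1; funext i
        rw [add_smul, smul_smul, smul_smul]
  · rintro x ⟨l, hl0, hl1, rfl⟩
    rw [← Finset.centerMass_eq_of_sum_1 _ _ hl1]
    exact Finset.centerMass_mem_convexHull _ (fun i _ => hl0 i) (by rw [hl1]; norm_num)
      (fun i _ => Set.mem_range_self i)

theorem polyh_convexHull_range {n k : ℕ} (s : Fin k → (Fin n → ℝ)) :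
    Polyh (convexHull ℝ (Set.range s)) := by
  classical
  set Q : Set ((Fin n → ℝ) × (Fin k → ℝ)) :=
    {p | (∀ i, 0 ≤ p.2 i) ∧ (∑ i, p.2 i) = 1 ∧ ∀ j, (∑ i, p.2 i * s i j) = p.1 j} with hQdef
  have hQ : Polyh Q := by
    have h1 : Polyh {p : (Fin n → ℝ) × (Fin k → ℝ) | ∀ i, 0 ≤ p.2 i} := by
      have : {p : (Fin n → ℝ) × (Fin k → ℝ) | ∀ i, 0 ≤ p.2 i} =
          ⋂ i : Fin k, {p | (0:ℝ) ≤ ((LinearMap.proj i).comp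
            (LinearMap.snd ℝ (Fin n → ℝ) (Fin k → ℝ))) p} := by
        ext p; simp [Set.mem_iInter]
      rw [this]
      exact Polyh.iInter fun i => Polyh.halfspace _ _
    have h2 : Polyh {p : (Fin n → ℝ) × (Fin k → ℝ) | (∑ i, p.2 i) = 1} := by
      have := Polyh.hyperplane
        (∑ i : Fin k, (LinearMap.proj i).comp (LinearMap.snd ℝ (Fin n → ℝ) (Fin k → ℝ))) 1
      convert this using 2 with p
      simp
    have h3 : Polyh {p : (Fin n → ℝ) × (Fin k → ℝ) | ∀ j, (∑ i, p.2 i * s i j) = p.1 j} := by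
      set g : Fin n → ((Fin n → ℝ) × (Fin k → ℝ)) →ₗ[ℝ] ℝ := fun j =>
        (∑ i : Fin k, s i j • ((LinearMap.proj i).comp
            (LinearMap.snd ℝ (Fin n → ℝ) (Fin k → ℝ)))) -
          (LinearMap.proj j).comp (LinearMap.fst ℝ (Fin n → ℝ) (Fin k → ℝ)) with hg
      have : {p : (Fin n → ℝ) × (Fin k → ℝ) | ∀ j, (∑ i, p.2 i * s i j) = p.1 j} =
          ⋂ j : Fin n, {p | g j p = (0:ℝ)} := by
        ext p
        simp only [Set.mem_setOf_eq, Set.mem_iInter, hg, LinearMap.sub_apply,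
          LinearMap.sum_apply, LinearMap.smul_apply, LinearMap.coe_comp, Function.comp_apply,
          LinearMap.proj_apply, LinearMap.snd_apply, LinearMap.fst_apply, smul_eq_mul,
          sub_eq_zero]
        refine forall_congr' fun j => ?_
        rw [Finset.sum_congr rfl fun i _ => mul_comm (s i j) (p.2 i)]
      rw [this]
      exact Polyh.iInter fun j => Polyh.hyperplane _ _
    have : Q = {p : (Fin n → ℝ) × (Fin k → ℝ) | ∀ i, 0 ≤ p.2 i} ∩
        ({p | (∑ i, p.2 i) = 1} ∩ {p | ∀ j, (∑ i, p.2 i * s i j) = p.1 j}) := by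
      ext p; simp [hQdef, and_assoc]
    rw [this]
    exact h1.inter (h2.inter h3)
  have hproj := hQ.proj
  convert hproj using 1
  rw [convexHull_range_eq_sum]
  ext x
  simp only [Set.mem_setOf_eq, hQdef]
  constructor
  · rintro ⟨l, hl0, hl1, rfl⟩
    exact ⟨l, hl0, hl1, fun j => by simp [Finset.sum_apply]⟩
  · rintro ⟨l, hl0, hl1, hl2⟩
    refine ⟨l, hl0, hl1, ?_⟩
    funext j
    simpa [Finset.sum_apply] using hl2 j

theorem Polyh.exists_matrix {n : ℕ} {P : Set (Fin n → ℝ)} (hP : Polyh P) :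
    ∃ (m : ℕ) (A : Matrix (Fin m) (Fin n) ℝ) (b : Fin m → ℝ),
      P = {x : Fin n → ℝ | ∀ i, b i ≤ A.mulVec x i} := by
  classical
  obtain ⟨ι, _, f, b, rfl⟩ := hP
  set e := (Fintype.equivFin ι).symm
  refine ⟨Fintype.card ι, fun i j => f (e i) (fun j' => if j = j' then 1 else 0),
    fun i => b (e i), ?_⟩
  have hval : ∀ (i : Fin (Fintype.card ι)) (x : Fin n → ℝ),
      Matrix.mulVec (fun i j => f (e i) (fun j' => if j = j' then 1 else 0)) x i = f (e i) x := by
    intro i x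
    rw [LinearMap.pi_apply_eq_sum_univ (f (e i)) x]
    simp only [Matrix.mulVec, dotProduct]
    exact Finset.sum_congr rfl fun j _ => by rw [smul_eq_mul, mul_comm]
  ext x
  simp only [Set.mem_setOf_eq]
  constructor
  · intro h i; rw [hval]; exact h (e i)
  · intro h i
    have := h (e.symm i)
    rwa [hval, Equiv.apply_symm_apply] at this

/-- A subset of `ℝ^n` is the convex hull of a finite set of points if and only if it is a
bounded polyhedron, i.e., a bounded set of the form `{x | Ax ≥ b}`. -/
theorem polytope_iff_bounded_polyhedron
    (n : ℕ) (P : Set (Fin n → ℝ)) :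
    (∃ S : Finset (Fin n → ℝ), P = convexHull ℝ (S : Set (Fin n → ℝ))) ↔
      (Bornology.IsBounded P ∧
        ∃ (m : ℕ) (A : Matrix (Fin m) (Fin n) ℝ) (b : Fin m → ℝ),
          P = {x : Fin n → ℝ | ∀ i, b i ≤ A.mulVec x i}) := by
  constructor
  · rintro ⟨S, rfl⟩
    refine ⟨isBounded_convexHull.2 S.finite_toSet.isBounded, ?_⟩
    set s : Fin S.card → (Fin n → ℝ) := fun i => (S.equivFin.symm i : Fin n → ℝ) with hs
    have hrange : Set.range s = (S : Set (Fin n → ℝ)) := by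
      ext x
      constructor
      · rintro ⟨i, rfl⟩; exact (S.equivFin.symm i).2
      · intro hx; exact ⟨S.equivFin ⟨x, hx⟩, by simp [hs]⟩
    rw [← hrange]
    exact (polyh_convexHull_range s).exists_matrix
  · rintro ⟨hbdd, m, A, b, rfl⟩
    set P : Set (Fin n → ℝ) := {x | ∀ i, b i ≤ A.mulVec x i} with hPdef
    have hmem : ∀ x : Fin n → ℝ, x ∈ P ↔ ∀ i, b i ≤ A.mulVec x i := fun x => Iff.rfl
    have hconv : Convex ℝ P := by
      intro x hx y hy a c ha hc hac
      rw [hmem] at hx hy ⊢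
      intro i
      have : A.mulVec (a • x + c • y) i = a * A.mulVec x i + c * A.mulVec y i := by
        rw [Matrix.mulVec_add, Matrix.mulVec_smul, Matrix.mulVec_smul]
        simp [smul_eq_mul]
      rw [this]
      have e1 : a * b i + c * b i = b i := by rw [← add_mul, hac, one_mul]
      linarith [mul_le_mul_of_nonneg_left (hx i) ha, mul_le_mul_of_nonneg_left (hy i) hc]
    have hclosed : IsClosed P := by
      have : P = ⋂ i, {x : Fin n → ℝ | b i ≤ A.mulVec x i} := by
        ext x; simp [hPdef, Set.mem_iInter]
      rw [this]
      refine isClosed_iInter fun i => isClosed_le continuous_const ?_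
      have : (fun x : Fin n → ℝ => A.mulVec x i) =
          ((LinearMap.proj i).comp A.mulVecLin : (Fin n → ℝ) →ₗ[ℝ] ℝ) := by
        funext x; simp [Matrix.mulVecLin_apply]
      rw [this]
      exact LinearMap.continuous_of_finiteDimensional _
    have hcomp : IsCompact P := Metric.isCompact_of_isClosed_isBounded hclosed hbdd
    set E := P.extremePoints ℝ with hE
    have key : Set.InjOn (fun x => {i | A.mulVec x i = b i}) E := by
      intro x hx y hy hxy
      by_contra hne
      have hxP : x ∈ P := hx.1
      have hyP : y ∈ P := hy.1
      have hev : ∀ᶠ ε : ℝ in nhdsWithin 0 (Set.Ioi 0),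
          ∀ i, b i ≤ A.mulVec (x + ε • (x - y)) i := by
        rw [Filter.eventually_all]
        intro i
        have hexp : ∀ ε : ℝ, A.mulVec (x + ε • (x - y)) i
            = A.mulVec x i + ε * (A.mulVec x i - A.mulVec y i) := by
          intro ε
          rw [Matrix.mulVec_add, Matrix.mulVec_smul, Matrix.mulVec_sub]
          simp [smul_eq_mul]
        by_cases htight : A.mulVec x i = b i
        · have hyt : A.mulVec y i = b i := by
            have h1 : i ∈ (fun x => {i | A.mulVec x i = b i}) x := htight
            rw [hxy] at h1
            exact h1
          filter_upwards with ε
          rw [hexp, htight, hyt]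
          simp
        · have hgt : b i < A.mulVec x i := lt_of_le_of_ne (hxP i) (Ne.symm htight)
          have hcont : Filter.Tendsto
              (fun ε : ℝ => A.mulVec x i + ε * (A.mulVec x i - A.mulVec y i))
              (nhdsWithin 0 (Set.Ioi 0)) (nhds (A.mulVec x i)) := by
            have hc : Continuous fun ε : ℝ =>
                A.mulVec x i + ε * (A.mulVec x i - A.mulVec y i) := by fun_prop
            have h0 := hc.tendsto 0
            simp only [zero_mul, add_zero] at h0
            exact h0.mono_left nhdsWithin_le_nhds
          filter_upwards [hcont.eventually (lt_mem_nhds hgt)] with ε hε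
          rw [hexp]
          exact le_of_lt hε
      obtain ⟨ε, hεmem, hεpos⟩ := (hev.and self_mem_nhdsWithin).exists
      have hεpos : (0:ℝ) < ε := hεpos
      set z := x + ε • (x - y) with hz
      have hzP : z ∈ P := hεmem
      have h1 : (0:ℝ) < 1 + ε := by linarith
      have hseg : x ∈ openSegment ℝ z y := by
        refine ⟨(1+ε)⁻¹, ε/(1+ε), by positivity, by positivity, ?_, ?_⟩
        · field_simp
        · rw [hz]
          match_scalars <;> field_simp <;> ring
      have := hx.2 hzP hyP hseg
      exact hne (hx.2 hyP hzP (by rwa [openSegment_symm] at hseg)).symm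
    have hEfin : E.Finite :=
      Set.Finite.of_finite_image (Set.toFinite _) key
    have hKM : closure (convexHull ℝ E) = P :=
      closure_convexHull_extremePoints hcomp hconv
    have hPE : P = convexHull ℝ E := by
      rw [← hKM, (hEfin.isClosed_convexHull ℝ).closure_eq]
    exact ⟨hEfin.toFinset, by rw [hEfin.coe_toFinset, hPE]⟩
end

section
/- Let C ⊆ ℝ^n. Then there exists an m×n real matrix A with C = {x ∈ ℝ^n | Ax ≥ 0} (inequality entrywise) if and only if there exist finitely many points p₁, …, p_k ∈ ℝ^n such that C = {λ₁p₁ + ⋯ + λ_k p_k : λ_i ≥ 0}, i.e., C is the set of all nonnegative linear combinations of a finite set of vectors. -/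
open Finset

namespace FMW

noncomputable section

attribute [local instance] Classical.propDecidable

variable {n : ℕ}

/-- dot product on `Fin n → ℝ` -/
def dot (x y : Fin n → ℝ) : ℝ := ∑ j, x j * y j

lemma dot_comm (x y : Fin n → ℝ) : dot x y = dot y x := by
  unfold dot; exact Finset.sum_congr rfl fun j _ => mul_comm _ _

lemma dot_zero_left (x : Fin n → ℝ) : dot 0 x = 0 := by simp [dot]

lemma dot_smul_left (a : ℝ) (v x : Fin n → ℝ) : dot (a • v) x = a * dot v x := by
  simp [dot, Finset.mul_sum, mul_assoc]

lemma dot_sub_left (v w x : Fin n → ℝ) : dot (v - w) x = dot v x - dot w x := by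
  simp [dot, sub_mul, Finset.sum_sub_distrib]

lemma dot_sum_right {ι : Type*} [Fintype ι] (v : Fin n → ℝ) (μ : ι → ℝ) (b : ι → Fin n → ℝ) :
    dot v (∑ r, μ r • b r) = ∑ r, μ r * dot v (b r) := by
  unfold dot
  simp only [Finset.sum_apply, Pi.smul_apply, smul_eq_mul, Finset.mul_sum]
  rw [Finset.sum_comm]
  exact Finset.sum_congr rfl fun r _ => Finset.sum_congr rfl fun j _ => by ring

/-- set of nonnegative combinations of a finite family -/
def coneSet {ι : Type} [Fintype ι] (p : ι → Fin n → ℝ) : Set (Fin n → ℝ) :=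
  {x | ∃ lam : ι → ℝ, (∀ i, 0 ≤ lam i) ∧ x = ∑ i, lam i • p i}

lemma mem_coneSet_self {ι : Type} [Fintype ι] (p : ι → Fin n → ℝ) (i : ι) :
    p i ∈ coneSet p := by
  refine ⟨fun i' => if i' = i then 1 else 0, fun i' => by positivity, ?_⟩
  simp [ite_smul]

/-- Fourier–Motzkin elimination: existential quantification over `k` auxiliary
variables in a finite system of linear inequalities can be eliminated. -/
lemma fm (k : ℕ) : ∀ (ι : Type) [Fintype ι] (c : ι → Fin k → ℝ) (v : ι → Fin n → ℝ),
    ∃ (m : ℕ) (w : Fin m → Fin n → ℝ),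
      {x : Fin n → ℝ | ∃ lam : Fin k → ℝ, ∀ i, 0 ≤ (∑ j, c i j * lam j) + dot (v i) x}
        = {x : Fin n → ℝ | ∀ r, 0 ≤ dot (w r) x} := by
  induction k with
  | zero =>
      intro ι _ c v
      refine ⟨Fintype.card ι, v ∘ (Fintype.equivFin ι).symm, ?_⟩
      ext x
      simp only [Set.mem_setOf_eq]
      constructor
      · rintro ⟨lam, h⟩ r
        simpa using h ((Fintype.equivFin ι).symm r)
      · intro h
        refine ⟨fun _ => 0, fun i => ?_⟩
        simpa using h ((Fintype.equivFin ι) i)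
  | succ k ih =>
      intro ι _ c v
      set a : ι → ℝ := fun i => c i (Fin.last k) with ha
      set c' : ({i // a i = 0} ⊕ ({i // 0 < a i} × {i' // a i' < 0})) → Fin k → ℝ :=
        Sum.elim (fun z => fun j => c z.1 j.castSucc)
          (fun z => fun j => a z.1.1 * c z.2.1 j.castSucc - a z.2.1 * c z.1.1 j.castSucc)
        with hc'
      set v' : ({i // a i = 0} ⊕ ({i // 0 < a i} × {i' // a i' < 0})) → Fin n → ℝ :=
        Sum.elim (fun z => v z.1)
          (fun z => a z.1.1 • v z.2.1 - a z.2.1 • v z.1.1)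
        with hv'
      obtain ⟨m, w, hw⟩ := ih _ c' v'
      refine ⟨m, w, ?_⟩
      rw [← hw]
      ext x
      simp only [Set.mem_setOf_eq]
      set S : ι → (Fin k → ℝ) → ℝ := fun i mu => (∑ j, c i j.castSucc * mu j) + dot (v i) x
        with hS
      have hsplit : ∀ (i : ι) (lam : Fin (k+1) → ℝ),
          (∑ j, c i j * lam j) + dot (v i) x
            = S i (fun j => lam j.castSucc) + a i * lam (Fin.last k) := by
        intro i lam
        rw [Fin.sum_univ_castSucc]
        simp [hS]; ring
      have hzeroval : ∀ (i : ι) (hi : a i = 0) (mu : Fin k → ℝ),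
          (∑ j, c' (Sum.inl ⟨i, hi⟩) j * mu j) + dot (v' (Sum.inl ⟨i, hi⟩)) x = S i mu := by
        intro i hi mu
        simp [hc', hv', hS]
      have hval : ∀ (i i' : ι) (hi : 0 < a i) (hi' : a i' < 0) (mu : Fin k → ℝ),
          (∑ j, c' (Sum.inr (⟨i, hi⟩, ⟨i', hi'⟩)) j * mu j)
              + dot (v' (Sum.inr (⟨i, hi⟩, ⟨i', hi'⟩))) x
            = a i * S i' mu - a i' * S i mu := by
        intro i i' hi hi' mu
        simp only [hc', hv', hS, Sum.elim_inr, dot_sub_left, dot_smul_left, sub_mul,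
          Finset.sum_sub_distrib, mul_assoc, ← Finset.mul_sum]
        ring
      constructor
      · rintro ⟨lam, hlam⟩
        refine ⟨fun j => lam j.castSucc, ?_⟩
        rintro (⟨i, hi⟩ | ⟨⟨i, hi⟩, ⟨i', hi'⟩⟩)
        · refine le_of_le_of_eq ?_ (hzeroval i hi _).symm
          have h1 := hlam i
          rw [hsplit, hi] at h1
          linarith
        · refine le_of_le_of_eq ?_ (hval i i' hi hi' _).symm
          have h1 := hlam i
          have h2 := hlam i'
          rw [hsplit] at h1 h2
          nlinarith
      · rintro ⟨mu, hmu⟩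
        set A : ι → ℝ := fun i => S i mu with hA
        set L : Finset ℝ := (univ.filter fun i => 0 < a i).image fun i => -A i / a i with hL
        set U : Finset ℝ := (univ.filter fun i => a i < 0).image fun i => -A i / a i with hU
        have key : ∀ l ∈ L, ∀ u ∈ U, l ≤ u := by
          intro l hl u hu
          simp only [hL, hU, Finset.mem_image, Finset.mem_filter, Finset.mem_univ,
            true_and] at hl hu
          obtain ⟨i, hi, rfl⟩ := hl
          obtain ⟨i', hi', rfl⟩ := hu
          have hc2 : 0 ≤ a i * A i' - a i' * A i :=
            le_of_le_of_eq (hmu (Sum.inr (⟨i, hi⟩, ⟨i', hi'⟩))) (hval i i' hi hi' mu)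
          have h2 : -A i' / a i' = A i' / (-a i') := by
            rw [div_neg, neg_div]
          rw [h2, div_le_div_iff₀ hi (by linarith)]
          nlinarith
        set t : ℝ := if hUne : U.Nonempty then U.min' hUne
          else if hLne : L.Nonempty then L.max' hLne else 0 with hT
        have ht1 : ∀ l ∈ L, l ≤ t := by
          intro l hl
          rw [hT]
          split_ifs with hUne hLne
          · exact Finset.le_min' _ _ _ fun u hu => key l hl u hu
          · exact Finset.le_max' _ _ hl
          · exact absurd ⟨l, hl⟩ hLne
        have ht2 : ∀ u ∈ U, t ≤ u := by
          intro u hu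
          rw [hT]
          split_ifs with hUne hLne
          · exact Finset.min'_le _ _ hu
          · exact absurd ⟨u, hu⟩ hUne
          · exact absurd ⟨u, hu⟩ hUne
        refine ⟨(Fin.snoc mu t : Fin (k+1) → ℝ), ?_⟩
        intro i
        rw [hsplit]
        have hmu' : (fun j => (Fin.snoc mu t : Fin (k+1) → ℝ) j.castSucc) = mu := by
          funext j; simp
        rw [Fin.snoc_last, hmu']
        have hAi : A i = S i mu := rfl
        rcases lt_trichotomy (a i) 0 with hneg | hzero | hpos
        · have hmem : -A i / a i ∈ U := by
            simp only [hU, Finset.mem_image, Finset.mem_filter, Finset.mem_univ, true_and]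
            exact ⟨i, hneg, rfl⟩
          have h3 := ht2 _ hmem
          rw [le_div_iff_of_neg hneg] at h3
          nlinarith [h3]
        · have h3 : (0:ℝ) ≤ S i mu :=
            le_of_le_of_eq (hmu (Sum.inl ⟨i, hzero⟩)) (hzeroval i hzero mu)
          rw [hzero]
          linarith
        · have hmem : -A i / a i ∈ L := by
            simp only [hL, Finset.mem_image, Finset.mem_filter, Finset.mem_univ, true_and]
            exact ⟨i, hpos, rfl⟩
          have h3 := ht1 _ hmem
          rw [div_le_iff₀ hpos] at h3
          nlinarith [h3]

lemma dot_single (jc : Fin n) (x : Fin n → ℝ) : dot (Pi.single jc 1) x = x jc := by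
  simp [dot, Pi.single_apply]

lemma dot_neg_left (v x : Fin n → ℝ) : dot (-v) x = -dot v x := by
  simp [dot]

/-- Weyl: a finitely generated cone is polyhedral. -/
lemma weyl {k : ℕ} (p : Fin k → Fin n → ℝ) :
    ∃ (m : ℕ) (w : Fin m → Fin n → ℝ),
      coneSet p = {x : Fin n → ℝ | ∀ r, 0 ≤ dot (w r) x} := by
  obtain ⟨m, w, hw⟩ := fm k (Fin k ⊕ (Fin n ⊕ Fin n))
    (Sum.elim (fun i₀ => fun j => if j = i₀ then 1 else 0)
      (Sum.elim (fun jc => fun i' => -(p i' jc)) (fun jc => fun i' => p i' jc)))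
    (Sum.elim (fun _ => 0)
      (Sum.elim (fun jc => Pi.single jc 1) (fun jc => -Pi.single jc 1)))
  refine ⟨m, w, ?_⟩
  rw [← hw]
  ext x
  simp only [Set.mem_setOf_eq, coneSet]
  have hsum : ∀ (lam : Fin k → ℝ) (jc : Fin n),
      (∑ i, lam i • p i) jc = ∑ i, p i jc * lam i := by
    intro lam jc
    rw [Finset.sum_apply]
    exact Finset.sum_congr rfl fun i _ => by simp [mul_comm]
  constructor
  · rintro ⟨lam, h0, rfl⟩
    refine ⟨lam, ?_⟩
    rintro (i₀ | jc | jc)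
    · simpa [dot] using h0 i₀
    · simp only [Sum.elim_inr, Sum.elim_inl, dot_single, hsum, neg_mul,
        Finset.sum_neg_distrib]
      linarith
    · simp only [Sum.elim_inr, dot_neg_left, dot_single, hsum]
      linarith
  · rintro ⟨lam, hlam⟩
    refine ⟨lam, fun i₀ => by simpa [dot] using hlam (Sum.inl i₀), ?_⟩
    funext jc
    have h1 := hlam (Sum.inr (Sum.inl jc))
    have h2 := hlam (Sum.inr (Sum.inr jc))
    simp only [Sum.elim_inr, Sum.elim_inl, dot_single, dot_neg_left, neg_mul,
      Finset.sum_neg_distrib] at h1 h2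
    rw [hsum]
    linarith

/-- Minkowski: a polyhedral cone is finitely generated. -/
lemma minkowski {mm : ℕ} (a : Fin mm → Fin n → ℝ) :
    ∃ (k : ℕ) (b : Fin k → Fin n → ℝ),
      {x : Fin n → ℝ | ∀ i, 0 ≤ dot (a i) x} = coneSet b := by
  obtain ⟨m', b, hb⟩ := weyl a
  refine ⟨m', b, ?_⟩
  ext x
  simp only [Set.mem_setOf_eq]
  constructor
  · intro hx
    obtain ⟨m'', d, hd⟩ := weyl b
    have hxb : x ∈ {y : Fin n → ℝ | ∀ s, 0 ≤ dot (d s) y} := by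
      intro s
      have hds : d s ∈ coneSet a := by
        rw [hb]
        intro r
        have hbr : b r ∈ coneSet b := mem_coneSet_self b r
        rw [hd] at hbr
        rw [dot_comm]
        exact hbr s
      obtain ⟨ν, hν, hde⟩ := hds
      rw [dot_comm, hde, dot_sum_right]
      exact Finset.sum_nonneg fun i _ => mul_nonneg (hν i)
        (by rw [dot_comm]; exact hx i)
    rw [← hd] at hxb
    exact hxb
  · rintro ⟨μ, hμ, rfl⟩ i
    rw [dot_sum_right]
    refine Finset.sum_nonneg fun r _ => mul_nonneg (hμ r) ?_
    rw [dot_comm]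
    have := mem_coneSet_self a i
    rw [hb] at this
    exact this r

lemma mulVec_eq_dot {m : ℕ} (A : Matrix (Fin m) (Fin n) ℝ) (x : Fin n → ℝ) (i : Fin m) :
    A.mulVec x i = dot (A i) x := by
  simp [Matrix.mulVec, dotProduct, dot]

end
end FMW

/-- Farkas–Minkowski–Weyl: a subset of `ℝ^n` has the form `{x | Ax ≥ 0}` for some real
matrix `A` if and only if it is the set of all nonnegative linear combinations of a
finite set of vectors `p₁, …, p_k`. -/
theorem polyhedral_cone_iff_finitely_generated_cone
    (n : ℕ) (C : Set (Fin n → ℝ)) :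
    (∃ (m : ℕ) (A : Matrix (Fin m) (Fin n) ℝ),
        C = {x : Fin n → ℝ | ∀ i, 0 ≤ A.mulVec x i}) ↔
      (∃ (k : ℕ) (p : Fin k → (Fin n → ℝ)),
        C = {x : Fin n → ℝ |
          ∃ lam : Fin k → ℝ, (∀ i, 0 ≤ lam i) ∧ x = ∑ i, lam i • p i}) := by
  constructor
  · rintro ⟨m, A, rfl⟩
    obtain ⟨k, b, hb⟩ := FMW.minkowski (fun i => A i)
    refine ⟨k, b, ?_⟩
    have : {x : Fin n → ℝ | ∀ i, 0 ≤ A.mulVec x i}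
        = {x : Fin n → ℝ | ∀ i, 0 ≤ FMW.dot (A i) x} := by
      ext x; simp only [Set.mem_setOf_eq, FMW.mulVec_eq_dot]
    rw [this, hb]
    rfl
  · rintro ⟨k, p, rfl⟩
    obtain ⟨m, w, hw⟩ := FMW.weyl p
    refine ⟨m, Matrix.of w, ?_⟩
    have h1 : {x : Fin n → ℝ | ∃ lam : Fin k → ℝ, (∀ i, 0 ≤ lam i) ∧ x = ∑ i, lam i • p i}
        = FMW.coneSet p := rfl
    rw [h1, hw]
    ext x
    simp only [Set.mem_setOf_eq, FMW.mulVec_eq_dot]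
    rfl
end
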